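/- arXiv:0711.1334 — 3 statements merged into one kernel-verified Lean document; each statement's English description precedes it below -/
import Mathlib

section
/- Let C be an m×n real matrix and Q a symmetric positive semidefinite n×n real matrix. If x ∈ ℝⁿ satisfies Qx = 0, then C(CᵀC + Q)⁺CᵀCx = Cx, where (·)⁺ denotes the Moore–Penrose pseudoinverse. -/
open Matrix

/-- `P` is the Moore–Penrose pseudoinverse of `M`. -/
def IsMoorePenrose {n : ℕ} (M P : Matrix (Fin n) (Fin n) ℝ) : Prop :=
  M * P * M = M ∧ P * M * P = P ∧ (M * P)ᵀ = M * P ∧ (P * M)ᵀ = P * M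

theorem stmt_9 {m n : ℕ} (C : Matrix (Fin m) (Fin n) ℝ) (Q Wp : Matrix (Fin n) (Fin n) ℝ)
    (hQ : Q.PosSemidef) (hWp : IsMoorePenrose (Cᵀ * C + Q) Wp)
    (x : Fin n → ℝ) (hx : Q *ᵥ x = 0) :
    C *ᵥ (Wp *ᵥ (Cᵀ *ᵥ (C *ᵥ x))) = C *ᵥ x := by
  set W : Matrix (Fin n) (Fin n) ℝ := Cᵀ * C + Q with hW
  have hWx : W *ᵥ x = Cᵀ *ᵥ (C *ᵥ x) := by
    simp [hW, add_mulVec, hx, mulVec_mulVec]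
  set y : Fin n → ℝ := Wp *ᵥ (W *ᵥ x) - x with hy
  have hWy : W *ᵥ y = 0 := by
    have h1 : W *ᵥ (Wp *ᵥ (W *ᵥ x)) = W *ᵥ x := by
      rw [mulVec_mulVec, mulVec_mulVec, hWp.1]
    rw [hy, mulVec_sub, h1, sub_self]
  have hquad : y ⬝ᵥ (W *ᵥ y) = 0 := by rw [hWy, dotProduct_zero]
  have hexp : (C *ᵥ y) ⬝ᵥ (C *ᵥ y) + y ⬝ᵥ (Q *ᵥ y) = 0 := by
    have : y ⬝ᵥ ((Cᵀ * C) *ᵥ y) = (C *ᵥ y) ⬝ᵥ (C *ᵥ y) := by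
      rw [← mulVec_mulVec, dotProduct_mulVec, vecMul_transpose]
    rw [← this, ← hquad, hW, add_mulVec, dotProduct_add]
  have hQy : 0 ≤ y ⬝ᵥ (Q *ᵥ y) := by
    have := hQ.dotProduct_mulVec_nonneg y
    simpa using this
  have hCy2 : 0 ≤ (C *ᵥ y) ⬝ᵥ (C *ᵥ y) := Finset.sum_nonneg fun i _ => mul_self_nonneg _
  have hCy : C *ᵥ y = 0 := by
    have h0 : (C *ᵥ y) ⬝ᵥ (C *ᵥ y) = 0 := le_antisymm (by linarith) hCy2
    exact (dotProduct_self_eq_zero).mp h0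
  have : C *ᵥ (Wp *ᵥ (W *ᵥ x)) - C *ᵥ x = 0 := by
    rw [← mulVec_sub, ← hy, hCy]
  rw [← hWx]
  exact sub_eq_zero.mp this
end

section
/- Let Φ : ℝⁿ → ℝ be Φ(x) = ⟨Q₀x, x⟩ - 2⟨r₀, x⟩ + α₀ with Q₀ symmetric positive semidefinite, and for x₁ ∈ ℝⁿ let Ψ(x₀, x₁) = ‖F₁x₁ - C₀x₀ - f₀‖² + ‖y₁ - H₁x₁‖². Suppose Φ ≥ 0 on ℝⁿ (so r₀ ∈ range Q₀). Then for every x₁, the infimum over x₀ of Φ(x₀) + Ψ(x₀, x₁) is attained at x̂₀ = (Q₀ + C₀ᵀC₀)⁺(C₀ᵀ(F₁x₁ - f₀) + r₀), and the resulting value function x₁ ↦ inf_{x₀}(Φ(x₀) + Ψ(x₀,x₁)) is again of the form ⟨Q₁x₁, x₁⟩ - 2⟨r₁, x₁⟩ + α₁ with Q₁ = H₁ᵀH₁ + F₁ᵀ(I - C₀(Q₀ + C₀ᵀC₀)⁺C₀ᵀ)F₁ symmetric positive semidefinite. -/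
open Matrix

namespace Stmt16Aux


lemma dp1 {m n : ℕ} (C : Matrix (Fin m) (Fin n) ℝ) (x : Fin n → ℝ) (z : Fin m → ℝ) :
    x ⬝ᵥ (z ᵥ* C) = z ⬝ᵥ (C *ᵥ x) := by
  rw [dotProduct_comm, ← dotProduct_mulVec]

lemma dps_nonneg {n : ℕ} (v : Fin n → ℝ) : 0 ≤ v ⬝ᵥ v :=
  Finset.sum_nonneg fun i _ => mul_self_nonneg _

lemma mp_unique {n : ℕ} {M P Q : Matrix (Fin n) (Fin n) ℝ}
    (hP : IsMoorePenrose M P) (hQ : IsMoorePenrose M Q) : P = Q := by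
  obtain ⟨hP1, hP2, hP3, hP4⟩ := hP
  obtain ⟨hQ1, hQ2, hQ3, hQ4⟩ := hQ
  have h1 : M * P = M * Q := by
    calc M * P = (M * P)ᵀ := hP3.symm
      _ = (M * Q * M * P)ᵀ := by rw [hQ1]
      _ = ((M * Q) * (M * P))ᵀ := by rw [Matrix.mul_assoc (M*Q) M P]
      _ = (M * P)ᵀ * (M * Q)ᵀ := by rw [transpose_mul]
      _ = (M * P) * (M * Q) := by rw [hP3, hQ3]
      _ = (M * P * M) * Q := by rw [Matrix.mul_assoc (M*P) M Q]
      _ = M * Q := by rw [hP1]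
  have h2 : P * M = Q * M := by
    calc P * M = (P * M)ᵀ := hP4.symm
      _ = (P * (M * Q * M))ᵀ := by rw [hQ1]
      _ = ((P * M) * (Q * M))ᵀ := by
          simp only [Matrix.mul_assoc]
      _ = (Q * M)ᵀ * (P * M)ᵀ := by rw [transpose_mul]
      _ = (Q * M) * (P * M) := by rw [hP4, hQ4]
      _ = Q * (M * P * M) := by simp only [Matrix.mul_assoc]
      _ = Q * M := by rw [hP1]
  calc P = P * M * P := hP2.symm
    _ = Q * M * P := by rw [h2]
    _ = Q * (M * P) := by rw [Matrix.mul_assoc]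
    _ = Q * (M * Q) := by rw [h1]
    _ = Q * M * Q := by rw [Matrix.mul_assoc]
    _ = Q := hQ2

lemma eq_zero_of_mulVec {a b : ℕ} (D : Matrix (Fin a) (Fin b) ℝ)
    (h : ∀ v, D *ᵥ v = 0) : D = 0 := by
  ext i j
  have := congrFun (h (Pi.single j 1)) i
  simpa [mulVec_single] using this

lemma gram_zero {a b c : ℕ} (D : Matrix (Fin a) (Fin c) ℝ) (G : Matrix (Fin b) (Fin c) ℝ)
    (h : Dᵀ * D + Gᵀ * G = 0) : D = 0 ∧ G = 0 := by
  have key : ∀ v, D *ᵥ v = 0 ∧ G *ᵥ v = 0 := by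
    intro v
    have h0 : (D *ᵥ v) ⬝ᵥ (D *ᵥ v) + (G *ᵥ v) ⬝ᵥ (G *ᵥ v) = 0 := by
      have h1 := congrArg (fun M => v ⬝ᵥ (M *ᵥ v)) h
      simpa [add_mulVec, ← mulVec_mulVec, mulVec_transpose, dotProduct_add, dp1,
        dotProduct_comm] using h1
    have hd := dps_nonneg (D *ᵥ v)
    have hg := dps_nonneg (G *ᵥ v)
    constructor
    · exact dotProduct_self_eq_zero.mp (by linarith)
    · exact dotProduct_self_eq_zero.mp (by linarith)
  exact ⟨eq_zero_of_mulVec D fun v => (key v).1, eq_zero_of_mulVec G fun v => (key v).2⟩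

lemma expandPhiPsi {m n : ℕ} (Q : Matrix (Fin n) (Fin n) ℝ) (C : Matrix (Fin m) (Fin n) ℝ)
    (x : Fin n → ℝ) (z : Fin m → ℝ) (r : Fin n → ℝ) (α Y : ℝ) :
    (Q *ᵥ x) ⬝ᵥ x - 2*(r ⬝ᵥ x) + α + ((z - C *ᵥ x) ⬝ᵥ (z - C *ᵥ x) + Y)
    = (((Q + Cᵀ*C) *ᵥ x) ⬝ᵥ x - 2*((Cᵀ *ᵥ z + r) ⬝ᵥ x)) + (α + z ⬝ᵥ z + Y) := by
  simp [add_mulVec, ← mulVec_mulVec, mulVec_transpose, ← dotProduct_mulVec,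
    dotProduct_sub, sub_dotProduct, dotProduct_add, add_dotProduct, dotProduct_comm, dp1]
  ring

lemma quad_min {n : ℕ} (A : Matrix (Fin n) (Fin n) ℝ) (hA : Aᵀ = A)
    (hPSD : ∀ v, 0 ≤ (A *ᵥ v) ⬝ᵥ v) (x xh : Fin n → ℝ) :
    (A *ᵥ xh) ⬝ᵥ xh - 2*((A *ᵥ xh) ⬝ᵥ xh) ≤ (A *ᵥ x) ⬝ᵥ x - 2*((A *ᵥ xh) ⬝ᵥ x) := by
  have h := hPSD (x - xh)
  have hsym : (A *ᵥ x) ⬝ᵥ xh = (A *ᵥ xh) ⬝ᵥ x := by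
    rw [dotProduct_comm, dotProduct_mulVec, ← mulVec_transpose, hA]
  have expand : (A *ᵥ (x - xh)) ⬝ᵥ (x - xh)
      = ((A *ᵥ x) ⬝ᵥ x - 2*((A *ᵥ xh) ⬝ᵥ x))
        - ((A *ᵥ xh) ⬝ᵥ xh - 2*((A *ᵥ xh) ⬝ᵥ xh)) := by
    rw [mulVec_sub, sub_dotProduct, dotProduct_sub, dotProduct_sub, hsym]
    ring
  linarith [expand ▸ h]

end Stmt16Aux

open Stmt16Aux

theorem stmt_16 {m n p : ℕ} (F₁ C₀ : Matrix (Fin m) (Fin n) ℝ)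
    (H₁ : Matrix (Fin p) (Fin n) ℝ) (f₀ : Fin m → ℝ) (y₁ : Fin p → ℝ)
    (Q₀ Wp : Matrix (Fin n) (Fin n) ℝ) (r₀ : Fin n → ℝ) (α₀ : ℝ)
    (hQ₀ : Q₀.PosSemidef) (hWp : IsMoorePenrose (Q₀ + C₀ᵀ * C₀) Wp)
    (Φ : (Fin n → ℝ) → ℝ)
    (hΦdef : ∀ x, Φ x = (Q₀ *ᵥ x) ⬝ᵥ x - 2 * (r₀ ⬝ᵥ x) + α₀)
    (hΦ : ∀ x, 0 ≤ Φ x)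
    (Ψ : (Fin n → ℝ) → (Fin n → ℝ) → ℝ)
    (hΨ : ∀ x₀ x₁, Ψ x₀ x₁ =
      (F₁ *ᵥ x₁ - C₀ *ᵥ x₀ - f₀) ⬝ᵥ (F₁ *ᵥ x₁ - C₀ *ᵥ x₀ - f₀) +
      (y₁ - H₁ *ᵥ x₁) ⬝ᵥ (y₁ - H₁ *ᵥ x₁))
    (xh : (Fin n → ℝ) → (Fin n → ℝ))
    (hxh : ∀ x₁, xh x₁ = Wp *ᵥ (C₀ᵀ *ᵥ (F₁ *ᵥ x₁ - f₀) + r₀))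
    (Q₁ : Matrix (Fin n) (Fin n) ℝ)
    (hQ₁ : Q₁ = H₁ᵀ * H₁ + F₁ᵀ * (1 - C₀ * Wp * C₀ᵀ) * F₁) :
    (∀ x₁ x₀, Φ (xh x₁) + Ψ (xh x₁) x₁ ≤ Φ x₀ + Ψ x₀ x₁) ∧
    Q₁.PosSemidef ∧
    ∃ r₁ : Fin n → ℝ, ∃ α₁ : ℝ, ∀ x₁,
      Φ (xh x₁) + Ψ (xh x₁) x₁ = (Q₁ *ᵥ x₁) ⬝ᵥ x₁ - 2 * (r₁ ⬝ᵥ x₁) + α₁ := by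
  set A : Matrix (Fin n) (Fin n) ℝ := Q₀ + C₀ᵀ * C₀ with hA
  have hQ₀t : Q₀ᵀ = Q₀ := by
    have := hQ₀.1
    rw [Matrix.IsHermitian, conjTranspose_eq_transpose_of_trivial] at this
    exact this
  have hAt : Aᵀ = A := by
    rw [hA, transpose_add, transpose_mul, transpose_transpose, hQ₀t]
  -- Wp is symmetric
  have hWp' : IsMoorePenrose A Wpᵀ := by
    obtain ⟨h1, h2, h3, h4⟩ := hWp
    refine ⟨?_, ?_, ?_, ?_⟩
    · calc A * Wpᵀ * A = (Aᵀ * Wp * Aᵀ)ᵀ := by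
            simp [transpose_mul, transpose_transpose, Matrix.mul_assoc]
        _ = (A * Wp * A)ᵀ := by rw [hAt]
        _ = Aᵀ := by rw [h1]
        _ = A := hAt
    · calc Wpᵀ * A * Wpᵀ = (Wp * Aᵀ * Wp)ᵀ := by
            simp [transpose_mul, transpose_transpose, Matrix.mul_assoc]
        _ = (Wp * A * Wp)ᵀ := by rw [hAt]
        _ = Wpᵀ := by rw [h2]
    · calc (A * Wpᵀ)ᵀ = Wp * Aᵀ := by simp [transpose_mul, transpose_transpose]
        _ = Wp * A := by rw [hAt]
        _ = (Wp * A)ᵀ := h4.symm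
        _ = Aᵀ * Wpᵀ := by rw [transpose_mul]
        _ = A * Wpᵀ := by rw [hAt]
    · calc (Wpᵀ * A)ᵀ = Aᵀ * Wp := by simp [transpose_mul, transpose_transpose]
        _ = A * Wp := by rw [hAt]
        _ = (A * Wp)ᵀ := h3.symm
        _ = Wpᵀ * Aᵀ := by rw [transpose_mul]
        _ = Wpᵀ * A := by rw [hAt]
  have hWsym : Wpᵀ = Wp := mp_unique hWp' hWp
  set E : Matrix (Fin n) (Fin n) ℝ := A * Wp with hE
  have hEsym : Eᵀ = E := hWp.2.2.1
  have hEE : E * E = E := by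
    rw [hE, Matrix.mul_assoc, ← Matrix.mul_assoc Wp A Wp, ← Matrix.mul_assoc A (Wp*A) Wp,
      ← Matrix.mul_assoc A Wp A, hWp.1]
  set B : Matrix (Fin n) (Fin n) ℝ := 1 - E with hB
  have hBA : B * A = 0 := by
    rw [hB, Matrix.sub_mul, Matrix.one_mul, hE]
    rw [Matrix.mul_assoc A Wp A, ← Matrix.mul_assoc A Wp A, hWp.1, sub_self]
  obtain ⟨S, hS⟩ : ∃ S : Matrix (Fin n) (Fin n) ℝ, Q₀ = Sᴴ * S := by
    open scoped MatrixOrder Matrix.Norms.L2Operator in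
    exact CStarAlgebra.nonneg_iff_eq_star_mul_self.mp hQ₀.nonneg
  have hSQ : Q₀ = Sᵀ * S := by rw [conjTranspose_eq_transpose_of_trivial] at hS; exact hS
  have hgram : (S * Bᵀ)ᵀ * (S * Bᵀ) + (C₀ * Bᵀ)ᵀ * (C₀ * Bᵀ) = 0 := by
    have e1 : (S * Bᵀ)ᵀ * (S * Bᵀ) + (C₀ * Bᵀ)ᵀ * (C₀ * Bᵀ) = B * A * Bᵀ := by
      rw [hA, hSQ]
      simp only [transpose_mul, transpose_transpose, Matrix.add_mul, Matrix.mul_add,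
        Matrix.mul_assoc]
    rw [e1, hBA, Matrix.zero_mul]
  obtain ⟨hSB, hCB⟩ := gram_zero _ _ hgram
  have hQB : Q₀ * Bᵀ = 0 := by rw [hSQ, Matrix.mul_assoc, hSB, Matrix.mul_zero]
  have hBQ : B * Q₀ = 0 := by
    have := congrArg Matrix.transpose hQB
    simpa [transpose_mul, hQ₀t] using this
  have hBC : B * C₀ᵀ = 0 := by
    have := congrArg Matrix.transpose hCB
    simpa [transpose_mul] using this
  have hEC : E * C₀ᵀ = C₀ᵀ := by
    have : (1 - E) * C₀ᵀ = 0 := hBC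
    rw [Matrix.sub_mul, Matrix.one_mul, sub_eq_zero] at this
    exact this.symm
  have hEQ : E * Q₀ = Q₀ := by
    have : (1 - E) * Q₀ = 0 := hBQ
    rw [Matrix.sub_mul, Matrix.one_mul, sub_eq_zero] at this
    exact this.symm
  have hQE : Q₀ * E = Q₀ := by
    have := congrArg Matrix.transpose hEQ
    simpa [transpose_mul, hQ₀t, hEsym] using this
  -- E fixes r₀
  have hEr : E *ᵥ r₀ = r₀ := by
    set w : Fin n → ℝ := r₀ - E *ᵥ r₀ with hw
    have hQw : Q₀ *ᵥ w = 0 := by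
      rw [hw, mulVec_sub, mulVec_mulVec, hQE, sub_self]
    have hEw : E *ᵥ w = 0 := by
      rw [hw, mulVec_sub, mulVec_mulVec, hEE, sub_self]
    have hrw : r₀ ⬝ᵥ w = w ⬝ᵥ w := by
      have h2 : (E *ᵥ r₀) ⬝ᵥ w = 0 := by
        rw [dotProduct_comm, dotProduct_mulVec, ← mulVec_transpose, hEsym, hEw,
          zero_dotProduct]
      rw [hw, sub_dotProduct, h2, sub_zero]
    have hc : w ⬝ᵥ w = 0 := by
      by_contra hne
      have hc0 : (w ⬝ᵥ w) ≠ 0 := hne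
      have hΦw := hΦ (((α₀ + 1)/(2 * (w ⬝ᵥ w))) • w)
      rw [hΦdef] at hΦw
      simp only [mulVec_smul, hQw, smul_zero, zero_dotProduct, dotProduct_zero,
        dotProduct_smul, smul_eq_mul, hrw] at hΦw
      have ht : (α₀ + 1) / (2 * (w ⬝ᵥ w)) * (w ⬝ᵥ w) = (α₀ + 1) / 2 := by
        field_simp
      rw [ht] at hΦw
      linarith
    have : w = 0 := dotProduct_self_eq_zero.mp hc
    rw [hw, sub_eq_zero] at this
    exact this.symm
  -- the key normal equation
  have key : ∀ x₁, A *ᵥ xh x₁ = C₀ᵀ *ᵥ (F₁ *ᵥ x₁ - f₀) + r₀ := by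
    intro x₁
    rw [hxh, mulVec_mulVec, ← hE, mulVec_add, mulVec_mulVec, hEC, hEr]
  -- PSD quadratic form of A
  have hApsd : ∀ v, 0 ≤ (A *ᵥ v) ⬝ᵥ v := by
    intro v
    have h1 : 0 ≤ star v ⬝ᵥ (Q₀ *ᵥ v) := hQ₀.dotProduct_mulVec_nonneg v
    have h2 : (A *ᵥ v) ⬝ᵥ v = v ⬝ᵥ (Q₀ *ᵥ v) + (C₀ *ᵥ v) ⬝ᵥ (C₀ *ᵥ v) := by
      rw [hA, add_mulVec, add_dotProduct, ← mulVec_mulVec, mulVec_transpose,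
        dotProduct_comm (Q₀ *ᵥ v) v]
      rw [dotProduct_comm ((C₀ *ᵥ v) ᵥ* C₀) v, dp1, dotProduct_comm]
    rw [h2]
    have := dps_nonneg (C₀ *ᵥ v)
    simp only [star_trivial] at h1
    linarith
  -- expansion of the cost
  have expand : ∀ x₁ x₀, Φ x₀ + Ψ x₀ x₁ =
      ((A *ᵥ x₀) ⬝ᵥ x₀ - 2*((C₀ᵀ *ᵥ (F₁ *ᵥ x₁ - f₀) + r₀) ⬝ᵥ x₀))
      + (α₀ + (F₁ *ᵥ x₁ - f₀) ⬝ᵥ (F₁ *ᵥ x₁ - f₀)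
          + (y₁ - H₁ *ᵥ x₁) ⬝ᵥ (y₁ - H₁ *ᵥ x₁)) := by
    intro x₁ x₀
    rw [hΦdef, hΨ, hA]
    have : F₁ *ᵥ x₁ - C₀ *ᵥ x₀ - f₀ = (F₁ *ᵥ x₁ - f₀) - C₀ *ᵥ x₀ := by
      abel
    rw [this]
    exact expandPhiPsi Q₀ C₀ x₀ (F₁ *ᵥ x₁ - f₀) r₀ α₀ _
  refine ⟨?_, ?_, ?_⟩
  · -- minimality
    intro x₁ x₀
    rw [expand x₁ x₀, expand x₁ (xh x₁)]
    have h := quad_min A hAt hApsd x₀ (xh x₁)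
    rw [key x₁] at h
    rw [key x₁]
    linarith
  · -- Q₁ PSD
    have hQ₁t : Q₁ᵀ = Q₁ := by
      rw [hQ₁]
      simp only [transpose_add, transpose_mul, transpose_sub, transpose_one,
        transpose_transpose, hWsym, Matrix.mul_assoc]
    refine posSemidef_iff_dotProduct_mulVec.mpr ?_
    constructor
    · show Q₁ᴴ = Q₁
      rw [conjTranspose_eq_transpose_of_trivial]; exact hQ₁t
    · intro x
      simp only [star_trivial]
      set u : Fin m → ℝ := F₁ *ᵥ x with hu
      set yh : Fin n → ℝ := Wp *ᵥ (C₀ᵀ *ᵥ u) with hyh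
      have hAy : A *ᵥ yh = C₀ᵀ *ᵥ u := by
        rw [hyh, mulVec_mulVec, ← hE, mulVec_mulVec, hEC]
      have hQy : Q₀ *ᵥ yh = C₀ᵀ *ᵥ u - C₀ᵀ *ᵥ (C₀ *ᵥ yh) := by
        rw [← hAy, hA, add_mulVec, ← mulVec_mulVec]
        abel
      have hid : x ⬝ᵥ (Q₁ *ᵥ x) =
          (H₁ *ᵥ x) ⬝ᵥ (H₁ *ᵥ x) + (Q₀ *ᵥ yh) ⬝ᵥ yh
          + (C₀ *ᵥ yh - u) ⬝ᵥ (C₀ *ᵥ yh - u) := by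
        rw [hQ₁, hQy, hyh, hu]
        simp [add_mulVec, sub_mulVec, Matrix.sub_mul, Matrix.add_mul, ← mulVec_mulVec,
          mulVec_transpose, ← dotProduct_mulVec, dotProduct_sub, sub_dotProduct,
          dotProduct_add, add_dotProduct, dotProduct_comm, dp1, mulVec_sub]
        ring
      have h1 : 0 ≤ (Q₀ *ᵥ yh) ⬝ᵥ yh := by
        have := hQ₀.dotProduct_mulVec_nonneg yh
        simpa [star_trivial, dotProduct_comm] using this
      have h2 := dps_nonneg (H₁ *ᵥ x)
      have h3 := dps_nonneg (C₀ *ᵥ yh - u)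
      rw [hid]
      linarith
  · -- value function
    refine ⟨H₁ᵀ *ᵥ y₁ + F₁ᵀ *ᵥ f₀ + (F₁ᵀ * (C₀ * Wp)) *ᵥ (r₀ - C₀ᵀ *ᵥ f₀),
      α₀ + f₀ ⬝ᵥ f₀ + y₁ ⬝ᵥ y₁ - (r₀ - C₀ᵀ *ᵥ f₀) ⬝ᵥ (Wp *ᵥ (r₀ - C₀ᵀ *ᵥ f₀)), ?_⟩
    intro x₁
    rw [expand x₁ (xh x₁)]
    have hval : (A *ᵥ xh x₁) ⬝ᵥ xh x₁ = (C₀ᵀ *ᵥ (F₁ *ᵥ x₁ - f₀) + r₀) ⬝ᵥ xh x₁ := by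
      rw [key x₁]
    rw [hval]
    rw [hxh, hQ₁]
    have hWc : ∀ (a b : Fin n → ℝ), a ⬝ᵥ (Wp *ᵥ b) = b ⬝ᵥ (Wp *ᵥ a) := by
      intro a b
      rw [dotProduct_mulVec, ← mulVec_transpose, hWsym, dotProduct_comm]
    simp [add_mulVec, sub_mulVec, mulVec_sub, Matrix.sub_mul, Matrix.add_mul,
      Matrix.mul_sub, Matrix.mul_add, ← mulVec_mulVec, mulVec_transpose,
      ← dotProduct_mulVec, dotProduct_sub, sub_dotProduct, dotProduct_add,
      add_dotProduct, dotProduct_comm, dp1, hWc]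
    ring
end

section
/- Let A be a symmetric positive semidefinite n×n real matrix with Moore–Penrose pseudoinverse A⁺. Then for every ℓ in the range of A, sup_{x : ⟨Ax,x⟩ ≤ 1} ⟨ℓ, x⟩ = ⟨A⁺ℓ, ℓ⟩^{1/2}, and the supremum is attained at x = A⁺ℓ / ⟨A⁺ℓ, ℓ⟩^{1/2} when ⟨A⁺ℓ, ℓ⟩ > 0. -/
open Matrix

theorem stmt_18 {n : ℕ} (A Ap : Matrix (Fin n) (Fin n) ℝ)
    (hA : A.PosSemidef) (hAp : IsMoorePenrose A Ap)
    (ℓ : Fin n → ℝ) (hℓ : ℓ ∈ Set.range A.mulVec) :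
    sSup ((fun x => ℓ ⬝ᵥ x) '' {x | (A *ᵥ x) ⬝ᵥ x ≤ 1}) =
      Real.sqrt ((Ap *ᵥ ℓ) ⬝ᵥ ℓ) ∧
    (0 < (Ap *ᵥ ℓ) ⬝ᵥ ℓ →
      (A *ᵥ ((Real.sqrt ((Ap *ᵥ ℓ) ⬝ᵥ ℓ))⁻¹ • (Ap *ᵥ ℓ))) ⬝ᵥ
          ((Real.sqrt ((Ap *ᵥ ℓ) ⬝ᵥ ℓ))⁻¹ • (Ap *ᵥ ℓ)) ≤ 1 ∧
      ℓ ⬝ᵥ ((Real.sqrt ((Ap *ᵥ ℓ) ⬝ᵥ ℓ))⁻¹ • (Ap *ᵥ ℓ)) =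
        Real.sqrt ((Ap *ᵥ ℓ) ⬝ᵥ ℓ)) := by
  obtain ⟨y, hy⟩ := hℓ
  set z := Ap *ᵥ ℓ with hzdef
  set c := (Ap *ᵥ ℓ) ⬝ᵥ ℓ with hcdef
  have hAz : A *ᵥ z = ℓ := by
    rw [hzdef, ← hy, mulVec_mulVec, mulVec_mulVec, hAp.1]
  -- nonnegativity of the quadratic form
  have hQ : ∀ x : Fin n → ℝ, 0 ≤ (A *ᵥ x) ⬝ᵥ x := by
    intro x
    have := hA.dotProduct_mulVec_nonneg x
    simpa [dotProduct_comm] using this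
  -- symmetry
  have hAt : Aᵀ = A := by
    have := hA.1
    rwa [Matrix.IsHermitian, conjTranspose_eq_transpose_of_trivial] at this
  have hsym : ∀ u v : Fin n → ℝ, (A *ᵥ u) ⬝ᵥ v = u ⬝ᵥ (A *ᵥ v) := by
    intro u v
    rw [dotProduct_mulVec, ← mulVec_transpose, hAt, dotProduct_comm]
  have hBzz : (A *ᵥ z) ⬝ᵥ z = c := by
    rw [hAz, dotProduct_comm, hcdef]
  have hc0 : 0 ≤ c := by rw [← hBzz]; exact hQ z
  have hlz : ℓ ⬝ᵥ z = c := by rw [dotProduct_comm, hcdef]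
  -- Cauchy–Schwarz
  have hCS : ∀ x : Fin n → ℝ, (ℓ ⬝ᵥ x) ^ 2 ≤ c * ((A *ᵥ x) ⬝ᵥ x) := by
    intro x
    have hquad : ∀ t : ℝ,
        0 ≤ c * (t * t) + (2 * (ℓ ⬝ᵥ x)) * t + (A *ᵥ x) ⬝ᵥ x := by
      intro t
      have h := hQ (x + t • z)
      have hBzx : (A *ᵥ z) ⬝ᵥ x = ℓ ⬝ᵥ x := by rw [hAz]
      have hBxz : (A *ᵥ x) ⬝ᵥ z = ℓ ⬝ᵥ x := by
        rw [hsym, hAz, dotProduct_comm]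
      calc 0 ≤ (A *ᵥ (x + t • z)) ⬝ᵥ (x + t • z) := h
        _ = c * (t * t) + (2 * (ℓ ⬝ᵥ x)) * t + (A *ᵥ x) ⬝ᵥ x := by
            simp only [mulVec_add, mulVec_smul, add_dotProduct, dotProduct_add,
              smul_dotProduct, dotProduct_smul, smul_eq_mul]
            rw [hBzz, hBzx, hBxz]
            ring
    have hd := discrim_le_zero hquad
    rw [discrim] at hd
    nlinarith [hd]
  -- upper bound
  have hub : ∀ r ∈ (fun x => ℓ ⬝ᵥ x) '' {x | (A *ᵥ x) ⬝ᵥ x ≤ 1},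
      r ≤ Real.sqrt c := by
    rintro r ⟨x, hx, rfl⟩
    have h1 : (ℓ ⬝ᵥ x) ^ 2 ≤ c := by
      calc (ℓ ⬝ᵥ x) ^ 2 ≤ c * ((A *ᵥ x) ⬝ᵥ x) := hCS x
        _ ≤ c * 1 := by exact mul_le_mul_of_nonneg_left hx hc0
        _ = c := mul_one c
    calc ℓ ⬝ᵥ x ≤ |ℓ ⬝ᵥ x| := le_abs_self _
      _ = Real.sqrt ((ℓ ⬝ᵥ x) ^ 2) := (Real.sqrt_sq_eq_abs _).symm
      _ ≤ Real.sqrt c := Real.sqrt_le_sqrt h1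
  -- membership of sqrt c in the image
  have hmem : Real.sqrt c ∈ (fun x => ℓ ⬝ᵥ x) '' {x | (A *ᵥ x) ⬝ᵥ x ≤ 1} := by
    rcases eq_or_lt_of_le hc0 with h0 | hpos
    · refine ⟨0, ?_, ?_⟩
      · simp [Set.mem_setOf_eq]
      · simp [← h0]
    · refine ⟨(Real.sqrt c)⁻¹ • z, ?_, ?_⟩
      · have hs : Real.sqrt c ≠ 0 := ne_of_gt (Real.sqrt_pos.mpr hpos)
        have : (A *ᵥ ((Real.sqrt c)⁻¹ • z)) ⬝ᵥ ((Real.sqrt c)⁻¹ • z)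
            = (Real.sqrt c)⁻¹ * ((Real.sqrt c)⁻¹ * c) := by
          rw [mulVec_smul, smul_dotProduct, dotProduct_smul, hBzz,
            smul_eq_mul, smul_eq_mul]
        rw [Set.mem_setOf_eq, this, ← Real.sqrt_mul_self hc0]
        field_simp
        rw [Real.sq_sqrt (Real.sqrt_nonneg _)]
      · have hs : Real.sqrt c ≠ 0 := ne_of_gt (Real.sqrt_pos.mpr hpos)
        show ℓ ⬝ᵥ ((Real.sqrt c)⁻¹ • z) = Real.sqrt c
        have : ℓ ⬝ᵥ ((Real.sqrt c)⁻¹ • z) = (Real.sqrt c)⁻¹ * c := by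
          rw [dotProduct_smul, hlz, smul_eq_mul]
        rw [this, ← Real.sqrt_mul_self hc0]
        field_simp
        rw [Real.sq_sqrt (Real.sqrt_nonneg _)]
  refine ⟨IsGreatest.csSup_eq ⟨hmem, hub⟩, ?_⟩
  intro hpos
  have hs : Real.sqrt c ≠ 0 := ne_of_gt (Real.sqrt_pos.mpr hpos)
  constructor
  · have h1 : (A *ᵥ ((Real.sqrt c)⁻¹ • z)) ⬝ᵥ ((Real.sqrt c)⁻¹ • z)
        = (Real.sqrt c)⁻¹ * ((Real.sqrt c)⁻¹ * c) := by
      rw [mulVec_smul, smul_dotProduct, dotProduct_smul, hBzz,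
        smul_eq_mul, smul_eq_mul]
    rw [h1]
    rw [← Real.sqrt_mul_self hc0] at *
    field_simp
    rw [Real.sq_sqrt (Real.sqrt_nonneg _)]
    exact div_self_le_one _
  · have h1 : ℓ ⬝ᵥ ((Real.sqrt c)⁻¹ • z) = (Real.sqrt c)⁻¹ * c := by
      rw [dotProduct_smul, hlz, smul_eq_mul]
    rw [h1, ← Real.sqrt_mul_self hc0]
    field_simp
    rw [Real.sq_sqrt (Real.sqrt_nonneg _)]
end
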